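/- arXiv:2311.15043 — 3 statements merged into one kernel-verified Lean document; each statement's English description precedes it below -/
import Mathlib

section
/- Let α ∈ (0,π) and let a, c ∈ ℝ² be distinct points. Suppose b₁ and b₂ are distinct points, neither lying on the line through a and c, lying strictly on the same side of that line, with ∠(a,b₁,c) = α and ∠(a,b₂,c) = α. Then the images of the two α-bend edges (a,b₁,c) and (a,b₂,c) intersect in a point different from a and from c (i.e., the two one-bend polylines cross). Consequently, a plane α-bend multigraph contains at most one edge between a and c whose bend point lies in a given open halfplane bounded by the line through a and c. -/
open EuclideanGeometry Real Set

noncomputable section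

/-- The Euclidean plane. -/
abbrev Pt : Type := EuclideanSpace ℝ (Fin 2)

/-- The image of a one-bend edge `(a,b,c)`: the union of segments `[a,b]` and `[b,c]`. -/
def bendImage (e : Pt × Pt × Pt) : Set Pt :=
  segment ℝ e.1 e.2.1 ∪ segment ℝ e.2.1 e.2.2

/-- The endpoints of a (bend or arc) edge `(a,b,c)` are `a` and `c`. -/
def edgeEndpoints (e : Pt × Pt × Pt) : Set Pt := {e.1, e.2.2}

/-- An `α`-bend edge: a triple `(a,b,c)` with `a ≠ c` and angle `α` at `b`. -/
def IsBendEdge (α : ℝ) (e : Pt × Pt × Pt) : Prop :=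
  e.1 ≠ e.2.2 ∧ ∠ e.1 e.2.1 e.2.2 = α

/-- A plane `α`-bend multigraph on a finite vertex set `V`. -/
def IsPlaneBendMultigraph (α : ℝ) (V : Finset Pt) (E : Finset (Pt × Pt × Pt)) : Prop :=
  (∀ e ∈ E, IsBendEdge α e ∧ e.1 ∈ V ∧ e.2.2 ∈ V) ∧
  (∀ e ∈ E, ∀ f ∈ E, e ≠ f → bendImage e ≠ bendImage f) ∧
  (∀ e ∈ E, ∀ v ∈ V, (v : Pt) ∈ bendImage e → (v : Pt) ∈ edgeEndpoints e) ∧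
  (∀ e ∈ E, ∀ f ∈ E, e ≠ f →
    bendImage e ∩ bendImage f ⊆ edgeEndpoints e ∩ edgeEndpoints f)

/-- A plane `α`-bend graph: a plane `α`-bend multigraph in which distinct edges
have distinct endpoint pairs. -/
def IsPlaneBendGraph (α : ℝ) (V : Finset Pt) (E : Finset (Pt × Pt × Pt)) : Prop :=
  IsPlaneBendMultigraph α V E ∧
  ∀ e ∈ E, ∀ f ∈ E, e ≠ f → edgeEndpoints e ≠ edgeEndpoints f

/-- An `α`-arc edge: a triple `(a,b,c)` with `a ≠ c`, `b` off of the line `ac`,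
and angle `α` at `b`. -/
def IsArcEdge (α : ℝ) (e : Pt × Pt × Pt) : Prop :=
  e.1 ≠ e.2.2 ∧ e.2.1 ∉ affineSpan ℝ ({e.1, e.2.2} : Set Pt) ∧ ∠ e.1 e.2.1 e.2.2 = α

/-- The image of an arc edge `(a,b,c)`: `{a,c}` together with the points strictly on the
same side of line `ac` as `b` from which the segment `ac` subtends the same angle as at `b`. -/
def arcImage (e : Pt × Pt × Pt) : Set Pt :=
  ({e.1, e.2.2} : Set Pt) ∪
    {x : Pt | (affineSpan ℝ ({e.1, e.2.2} : Set Pt)).SSameSide x e.2.1 ∧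
      ∠ e.1 x e.2.2 = ∠ e.1 e.2.1 e.2.2}

/-- A plane `α`-arc multigraph on a finite vertex set `V`. -/
def IsPlaneArcMultigraph (α : ℝ) (V : Finset Pt) (E : Finset (Pt × Pt × Pt)) : Prop :=
  (∀ e ∈ E, IsArcEdge α e ∧ e.1 ∈ V ∧ e.2.2 ∈ V) ∧
  (∀ e ∈ E, ∀ f ∈ E, e ≠ f → arcImage e ≠ arcImage f) ∧
  (∀ e ∈ E, ∀ v ∈ V, (v : Pt) ∈ arcImage e → (v : Pt) ∈ edgeEndpoints e) ∧
  (∀ e ∈ E, ∀ f ∈ E, e ≠ f →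
    arcImage e ∩ arcImage f ⊆ edgeEndpoints e ∩ edgeEndpoints f)

/-- A plane `α`-arc graph: a plane `α`-arc multigraph in which distinct edges
have distinct endpoint pairs. -/
def IsPlaneArcGraph (α : ℝ) (V : Finset Pt) (E : Finset (Pt × Pt × Pt)) : Prop :=
  IsPlaneArcMultigraph α V E ∧
  ∀ e ∈ E, ∀ f ∈ E, e ≠ f → edgeEndpoints e ≠ edgeEndpoints f

/-- A finite point set is in general position if no three of its points are collinear. -/
def GenPos (P : Finset Pt) : Prop :=
  ∀ p ∈ P, ∀ q ∈ P, ∀ r ∈ P, p ≠ q → p ≠ r → q ≠ r →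
    ¬ Collinear ℝ ({p, q, r} : Set Pt)

/-- A planar straight-line graph on `P`: edges are (ordered representatives of unordered)
pairs of distinct points of `P` whose closed segments pairwise intersect only in shared
endpoints, and no segment contains a point of `P` other than its endpoints. -/
def IsPSLG (P : Finset Pt) (E : Finset (Pt × Pt)) : Prop :=
  (∀ e ∈ E, e.1 ∈ P ∧ e.2 ∈ P ∧ e.1 ≠ e.2) ∧
  (∀ e ∈ E, ∀ f ∈ E, e ≠ f → segment ℝ e.1 e.2 ≠ segment ℝ f.1 f.2) ∧
  (∀ e ∈ E, ∀ p ∈ P, (p : Pt) ∈ segment ℝ e.1 e.2 → p = e.1 ∨ p = e.2) ∧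
  (∀ e ∈ E, ∀ f ∈ E, e ≠ f →
    segment ℝ e.1 e.2 ∩ segment ℝ f.1 f.2 ⊆ ({e.1, e.2} : Set Pt) ∩ ({f.1, f.2} : Set Pt))

/-- `M P`: the maximum number of edges of a planar straight-line graph on `P`. -/
def M (P : Finset Pt) : ℕ :=
  sSup {m : ℕ | ∃ E : Finset (Pt × Pt), IsPSLG P E ∧ E.card = m}

/-- Two segments (given by their endpoint pairs) cross: they meet in exactly one point,
which lies in the relative interior (open segment) of both. -/
def SegCross (s t : Pt × Pt) : Prop :=
  ∃ x : Pt, segment ℝ s.1 s.2 ∩ segment ℝ t.1 t.2 = {x} ∧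
    x ∈ openSegment ℝ s.1 s.2 ∧ x ∈ openSegment ℝ t.1 t.2

/-
Write `b₂ = u • a + v • b₁ + w • c` with `u + v + w = 1`; since `b₂` lies on the side of `b₁`,
`v > 0`. If `u ≤ 0 ≤ w`, the segment `[a, b₂]` meets `[b₁, c]` away from `a` and `c`, and
symmetrically if `w ≤ 0 ≤ u`. Otherwise `u` and `w` have the same strict sign, so one bend point
lies strictly inside the triangle formed by `a`, `c` and the other one. Two applications of the
exterior angle theorem then show that `ac` subtends a strictly larger angle at the inner bend point,
contradicting `∠ a b₁ c = ∠ a b₂ c`. Planarity forbids two such edges from crossing.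
-/

open AffineMap

section LinearCombination

variable {V : Type*} [AddCommGroup V] [Module ℝ V] {a b c : V}

lemma not_collinear_of_notMem_affineSpan_pair (hac : a ≠ c) (hb : b ∉ line[ℝ, a, c]) :
    ¬ Collinear ℝ {a, b, c} :=
  fun h ↦ hb (h.mem_affineSpan_of_mem_of_ne (by simp) (by simp) (by simp) hac)

lemma exists_eq_smul_add_smul_add_smul [FiniteDimensional ℝ V] (hV : Module.finrank ℝ V = 2)
    (habc : ¬ Collinear ℝ {a, b, c}) (x : V) :
    ∃ u v w : ℝ, u + v + w = 1 ∧ x = u • a + v • b + w • c := by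
  have hspan : affineSpan ℝ (Set.range ![a, b, c]) = ⊤ :=
    (affineIndependent_iff_not_collinear_set.mpr habc)
      |>.affineSpan_eq_top_iff_card_eq_finrank_add_one.mpr (by simp [hV])
  obtain ⟨w, hw, rfl⟩ :=
    eq_affineCombination_of_mem_affineSpan_of_fintype (hspan ▸ AffineSubspace.mem_top ℝ V x)
  refine ⟨w 0, w 1, w 2, by simpa [Fin.sum_univ_three] using hw, ?_⟩
  rw [Finset.affineCombination_eq_linear_combination _ _ _ hw]
  simp [Fin.sum_univ_three]

lemma pos_of_sSameSide_smul_add_smul_add_smul {u v w : ℝ} (huvw : u + v + w = 1)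
    (h : line[ℝ, a, c].SSameSide b (u • a + v • b + w • c)) : 0 < v := by
  have hx : u • a + v • b + w • c = v • (b -ᵥ a) +ᵥ lineMap a c w := by
    rw [lineMap_apply_module, vsub_eq_sub, vadd_eq_add]
    match_scalars <;> linarith
  rw [hx] at h
  have hmem : lineMap a c w ∈ line[ℝ, a, c] := lineMap_mem_affineSpan_pair _ _ _
  rcases lt_trichotomy v 0 with hv | rfl | hv
  · exact absurd (AffineSubspace.sOppSide_smul_vsub_vadd_right h.2.1
      (left_mem_affineSpan_pair _ _ _) hmem hv) h.not_sOppSide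
  · simp only [zero_smul, zero_vadd] at h
    exact absurd hmem h.2.2
  · exact hv

lemma exists_mem_segment_inter_smul_add_smul_add_smul (habc : ¬ Collinear ℝ {a, b, c})
    {u v w : ℝ} (hu : u ≤ 0) (hv : 0 < v) (hw : 0 ≤ w) (huvw : u + v + w = 1) :
    ∃ y ∈ segment ℝ b c ∩ segment ℝ a (u • a + v • b + w • c), y ≠ a ∧ y ≠ c := by
  set y := (v / (v + w)) • b + (w / (v + w)) • c
  have hbc : y ∈ segment ℝ b c := ⟨_, _, by positivity, by positivity, by field_simp, rfl⟩
  have hab : y ∈ segment ℝ a (u • a + v • b + w • c) := by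
    refine ⟨-u / (v + w), 1 / (v + w), div_nonneg (by linarith) (by positivity),
      by positivity, by field_simp; linarith, ?_⟩
    simp only [y, smul_add, smul_smul]
    match_scalars <;> field_simp
    ring
  refine ⟨y, ⟨hbc, hab⟩, fun h ↦ habc ?_, fun h ↦ ne₂₃_of_not_collinear habc ?_⟩
  · exact collinear_insert_of_mem_affineSpan_pair
      (h ▸ (mem_segment_iff_wbtw.1 hbc).mem_affineSpan)
  · have hyc : y - c = (v / (v + w)) • (b - c) := by
      simp only [y]
      match_scalars <;> field_simp
      ring
    rw [h, sub_self, eq_comm, smul_eq_zero] at hyc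
    exact sub_eq_zero.1 (hyc.resolve_left (by positivity))

end LinearCombination

lemma not_collinear_of_wbtw {V P : Type*} [AddCommGroup V] [Module ℝ V] [AddTorsor V P]
    {p q r c : P} (h : Wbtw ℝ p q r) (hqr : q ≠ r)
    (hc : ¬ Collinear ℝ {c, p, r}) : ¬ Collinear ℝ {c, q, r} := by
  intro hcol
  have hc' : c ∈ line[ℝ, q, r] :=
    hcol.mem_affineSpan_of_mem_of_ne (by simp) (by simp) (by simp) hqr
  rw [affineSpan_pair_eq_of_left_mem_of_ne h.mem_affineSpan hqr] at hc'
  exact hc (collinear_insert_of_mem_affineSpan_pair hc')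

section Euclidean

variable {V P : Type*} [NormedAddCommGroup V] [InnerProductSpace ℝ V] [MetricSpace P]
  [NormedAddTorsor V P]

lemma angle_lt_angle_of_sbtw {p q r c : P} (h : Sbtw ℝ p q r) (hc : ¬ Collinear ℝ {c, q, r}) :
    ∠ q r c < ∠ p q c := by
  have hline : ∠ c q p + ∠ c q r = π := angle_add_angle_eq_pi_of_angle_eq_pi c h.angle₁₂₃_eq_pi
  have htri : ∠ c q r + ∠ q r c + ∠ r c q = π :=
    angle_add_angle_add_angle_eq_pi r (ne₁₂_of_not_collinear hc).symm
  have hpos : 0 < ∠ r c q := angle_pos_of_not_collinear (by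
    rwa [Set.insert_comm, Set.pair_comm])
  rw [angle_comm p q c]
  linarith

lemma angle_lt_angle_of_sbtw_of_sbtw {a b c d x : P} (hbdc : Sbtw ℝ b d c) (haxd : Sbtw ℝ a x d)
    (habc : ¬ Collinear ℝ {a, b, c}) : ∠ a b c < ∠ a x c := by
  have hadb : ¬ Collinear ℝ {a, d, b} :=
    not_collinear_of_wbtw hbdc.symm.wbtw hbdc.ne_left (by rwa [Set.pair_comm])
  have hadc : ¬ Collinear ℝ {a, d, c} := not_collinear_of_wbtw hbdc.wbtw hbdc.ne_right habc
  have hcxd : ¬ Collinear ℝ {c, x, d} :=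
    not_collinear_of_wbtw haxd.wbtw haxd.ne_right (by rwa [Set.insert_comm, Set.pair_comm])
  calc ∠ a b c = ∠ d b a := by rw [← hbdc.angle_eq_right a, angle_comm]
    _ < ∠ c d a := angle_lt_angle_of_sbtw hbdc.symm hadb
    _ = ∠ x d c := by rw [← haxd.symm.angle_eq_right c, angle_comm]
    _ < ∠ a x c := angle_lt_angle_of_sbtw haxd hcxd

end Euclidean

section InnerProductSpace

variable {V : Type*} [NormedAddCommGroup V] [InnerProductSpace ℝ V] {a b c : V}

lemma angle_lt_angle_smul_add_smul_add_smul (habc : ¬ Collinear ℝ {a, b, c}) {u v w : ℝ}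
    (hu : 0 < u) (hv : 0 < v) (hw : 0 < w) (huvw : u + v + w = 1) :
    ∠ a b c < ∠ a (u • a + v • b + w • c) c := by
  set d := lineMap b c (w / (v + w))
  have hbdc : Sbtw ℝ b d c := sbtw_iff_mem_image_Ioo_and_ne.mpr
    ⟨⟨_, ⟨by positivity, (div_lt_one (by positivity)).2 (by linarith)⟩, rfl⟩,
      ne₂₃_of_not_collinear habc⟩
  have had : a ≠ d := fun h ↦
    habc (collinear_insert_of_mem_affineSpan_pair (h ▸ hbdc.wbtw.mem_affineSpan))
  have haxd : Sbtw ℝ a (lineMap a d (v + w)) d := sbtw_iff_mem_image_Ioo_and_ne.mpr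
    ⟨⟨_, ⟨by positivity, by linarith⟩, rfl⟩, had⟩
  have hx : u • a + v • b + w • c = lineMap a d (v + w) := by
    simp only [d, lineMap_apply_module]
    match_scalars <;> field_simp <;> linarith
  rw [hx]
  exact angle_lt_angle_of_sbtw_of_sbtw hbdc haxd habc

lemma angle_ne_angle_smul_add_smul_add_smul (habc : ¬ Collinear ℝ {a, b, c}) {u v w : ℝ}
    (hx : ¬ Collinear ℝ {a, u • a + v • b + w • c, c}) (hv : 0 < v) (huvw : u + v + w = 1)
    (huw : 0 < u ∧ 0 < w ∨ u < 0 ∧ w < 0) :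
    ∠ a b c ≠ ∠ a (u • a + v • b + w • c) c := by
  rcases huw with ⟨hu, hw⟩ | ⟨hu, hw⟩
  · exact (angle_lt_angle_smul_add_smul_add_smul habc hu hv hw huvw).ne
  · -- `b` lies strictly inside the triangle `a (u • a + v • b + w • c) c`
    have hb : (-u / v) • a + (1 / v) • (u • a + v • b + w • c) + (-w / v) • c = b := by
      simp only [smul_add, smul_smul]
      match_scalars <;> field_simp <;> ring
    have h := angle_lt_angle_smul_add_smul_add_smul hx (div_pos (neg_pos.2 hu) hv)
      (one_div_pos.2 hv) (div_pos (neg_pos.2 hw) hv) (by field_simp; linarith)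
    rw [hb] at h
    exact h.ne'

end InnerProductSpace

lemma bendImage_swap (a b c : Pt) : bendImage (c, b, a) = bendImage (a, b, c) := by
  simp only [bendImage, segment_symm ℝ c b, segment_symm ℝ b a, Set.union_comm]

lemma exists_mem_bendImage_inter_of_sSameSide {a b₁ b₂ c : Pt} (hac : a ≠ c)
    (hside : line[ℝ, a, c].SSameSide b₁ b₂) (hangle : ∠ a b₁ c = ∠ a b₂ c) :
    ∃ x ∈ bendImage (a, b₁, c) ∩ bendImage (a, b₂, c), x ≠ a ∧ x ≠ c := by
  have h₁ : ¬ Collinear ℝ {a, b₁, c} := not_collinear_of_notMem_affineSpan_pair hac hside.2.1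
  have h₂ : ¬ Collinear ℝ {a, b₂, c} := not_collinear_of_notMem_affineSpan_pair hac hside.2.2
  obtain ⟨u, v, w, huvw, rfl⟩ := exists_eq_smul_add_smul_add_smul finrank_euclideanSpace_fin h₁ b₂
  have hv : 0 < v := pos_of_sSameSide_smul_add_smul_add_smul huvw hside
  by_cases hcross : u ≤ 0 ∧ 0 ≤ w
  · obtain ⟨y, ⟨hyb₁, hyb₂⟩, hy⟩ :=
      exists_mem_segment_inter_smul_add_smul_add_smul h₁ hcross.1 hv hcross.2 huvw
    exact ⟨y, ⟨Or.inr hyb₁, Or.inl hyb₂⟩, hy⟩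
  by_cases hcross' : w ≤ 0 ∧ 0 ≤ u
  · have h₁' : ¬ Collinear ℝ {c, b₁, a} := by
      rwa [Set.insert_comm, Set.pair_comm, Set.insert_comm]
    obtain ⟨y, ⟨hyb₁, hyb₂⟩, hyc, hya⟩ :=
      exists_mem_segment_inter_smul_add_smul_add_smul h₁' hcross'.1 hv hcross'.2 (by linarith)
    rw [← bendImage_swap a, ← bendImage_swap a,
      show u • a + v • b₁ + w • c = w • c + v • b₁ + u • a by abel]
    exact ⟨y, ⟨Or.inr hyb₁, Or.inl hyb₂⟩, hya, hyc⟩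
  refine absurd hangle (angle_ne_angle_smul_add_smul_add_smul h₁ h₂ hv huvw ?_)
  push Not at hcross hcross'
  rcases lt_or_ge 0 u with hu | hu
  · exact Or.inl ⟨hu, by by_contra! hw; linarith [hcross' hw]⟩
  · exact Or.inr ⟨hcross' (hcross hu).le, hcross hu⟩

lemma IsBendEdge.angle_eq_and_bendImage_eq {α : ℝ} {e : Pt × Pt × Pt} (he : IsBendEdge α e)
    {a c : Pt} (hac : edgeEndpoints e = {a, c}) :
    ∠ a e.2.1 c = α ∧ bendImage e = bendImage (a, e.2.1, c) := by
  obtain ⟨x, b, y⟩ := e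
  rcases Set.pair_eq_pair_iff.mp hac with ⟨rfl, rfl⟩ | ⟨rfl, rfl⟩
  · exact ⟨he.2, rfl⟩
  · exact ⟨by rw [angle_comm]; exact he.2, bendImage_swap _ _ _⟩

theorem stmt_0_general (α : ℝ)
    (a c : Pt) (hac : a ≠ c) (b₁ b₂ : Pt)
    (hside : (affineSpan ℝ ({a, c} : Set Pt)).SSameSide b₁ b₂)
    (h₁ : ∠ a b₁ c = α) (h₂ : ∠ a b₂ c = α) :
    (∃ x : Pt, x ∈ bendImage (a, b₁, c) ∩ bendImage (a, b₂, c) ∧ x ≠ a ∧ x ≠ c) ∧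
    (∀ (V : Finset Pt) (E : Finset (Pt × Pt × Pt)), IsPlaneBendMultigraph α V E →
      ∀ e ∈ E, ∀ f ∈ E, edgeEndpoints e = {a, c} → edgeEndpoints f = {a, c} →
        (affineSpan ℝ ({a, c} : Set Pt)).SSameSide e.2.1 f.2.1 → e = f) := by
  refine ⟨exists_mem_bendImage_inter_of_sSameSide hac hside (h₁.trans h₂.symm), ?_⟩
  intro V E hE e he f hf hea hfa hef
  by_contra hne
  obtain ⟨hαe, hIe⟩ := (hE.1 e he).1.angle_eq_and_bendImage_eq hea
  obtain ⟨hαf, hIf⟩ := (hE.1 f hf).1.angle_eq_and_bendImage_eq hfa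
  obtain ⟨x, hx, hxa, hxc⟩ :=
    exists_mem_bendImage_inter_of_sSameSide hac hef (hαe.trans hαf.symm)
  rw [← hIe, ← hIf] at hx
  have hxe : x ∈ edgeEndpoints e := (hE.2.2.2 e he f hf hne hx).1
  rw [hea] at hxe
  rcases hxe with rfl | rfl <;> contradiction

/-- Two `α`-bend edges between `a` and `c` whose bend points lie strictly on the same side
of line `ac` must cross; hence a plane `α`-bend multigraph has at most one edge between
`a` and `c` with bend point in a given open halfplane bounded by line `ac`. -/
theorem stmt_0 (α : ℝ) (hα : α ∈ Set.Ioo 0 π)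
    (a c : Pt) (hac : a ≠ c) (b₁ b₂ : Pt) (hb : b₁ ≠ b₂)
    (hb₁ : b₁ ∉ affineSpan ℝ ({a, c} : Set Pt))
    (hb₂ : b₂ ∉ affineSpan ℝ ({a, c} : Set Pt))
    (hside : (affineSpan ℝ ({a, c} : Set Pt)).SSameSide b₁ b₂)
    (h₁ : ∠ a b₁ c = α) (h₂ : ∠ a b₂ c = α) :
    (∃ x : Pt, x ∈ bendImage (a, b₁, c) ∩ bendImage (a, b₂, c) ∧ x ≠ a ∧ x ≠ c) ∧
    (∀ (V : Finset Pt) (E : Finset (Pt × Pt × Pt)), IsPlaneBendMultigraph α V E →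
      ∀ e ∈ E, ∀ f ∈ E, edgeEndpoints e = {a, c} → edgeEndpoints f = {a, c} →
        (affineSpan ℝ ({a, c} : Set Pt)).SSameSide e.2.1 f.2.1 → e = f) :=
  stmt_0_general α a c hac b₁ b₂ hside h₁ h₂
end
end

section
/- For every pair of distinct points a, c ∈ ℝ² and every angle β ∈ (0,π), there exist exactly two points o ∈ ℝ² satisfying dist(o,a) = dist(o,c) and ∠(a,o,c) = β, and these two points lie strictly on opposite sides of the line through a and c. (Hence there are precisely two circular arcs of a given central angle between a and c, one in each open halfplane bounded by the line ac.) -/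
open EuclideanGeometry Real Set

noncomputable section

/-!
A point `p` with `dist p a = dist p c` lies on the perpendicular bisector of `[a, c]`, which in
the plane is the line through the midpoint `m` in the direction `J (c - m)`, `J` the rotation by
`π / 2`; so `p = m + s • J (c - m)` for a unique real `s`. The two halves of the isosceles
triangle `a p c` are right triangles with legs `‖c - m‖` and `|s| ‖c - m‖`, whence
`cos ∠ a p c = (s ^ 2 - 1) / (s ^ 2 + 1)`, i.e. `cot (∠ a p c / 2) = |s|`. Thus `∠ a p c = β`
exactly for `s = ± cot (β / 2)`, and these two points are reflections of each other in `m`,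
hence strictly on opposite sides of the line `ac`.
-/

open scoped InnerProductSpace

theorem Real.cos_eq_cot_half_sq {β : ℝ} (hβ : sin (β / 2) ≠ 0) :
    cos β = (cot (β / 2) ^ 2 - 1) / (cot (β / 2) ^ 2 + 1) := by
  have hsc := sin_sq_add_cos_sq (β / 2)
  have hcos := cos_sq (β / 2)
  rw [mul_div_cancel₀ β two_ne_zero] at hcos
  rw [cot_eq_cos_div_sin, div_pow]
  field_simp
  linear_combination (cos β + 1) * hsc - 2 * hcos

theorem sub_one_div_add_one_inj {x y : ℝ} (hx : 0 ≤ x) (hy : 0 ≤ y) :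
    (x - 1) / (x + 1) = (y - 1) / (y + 1) ↔ x = y := by
  rw [div_eq_div_iff (by positivity) (by positivity)]
  constructor <;> intro h <;> linarith

theorem InnerProductGeometry.cos_angle_neg_sub_smul_sub_smul {V : Type*} [NormedAddCommGroup V]
    [InnerProductSpace ℝ V] {u w : V} (hu : u ≠ 0) (huw : ⟪u, w⟫_ℝ = 0) (hw : ‖w‖ = ‖u‖)
    (s : ℝ) :
    cos (InnerProductGeometry.angle (-u - s • w) (u - s • w)) = (s ^ 2 - 1) / (s ^ 2 + 1) := by
  have huw' : ⟪u, s • w⟫_ℝ = 0 := by rw [real_inner_smul_right, huw, mul_zero]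
  have hsw : ‖s • w‖ * ‖s • w‖ = s ^ 2 * (‖u‖ * ‖u‖) := by
    rw [norm_smul, hw, Real.norm_eq_abs, ← sq_abs s]; ring
  have hsub := norm_sub_sq_eq_norm_sq_add_norm_sq_real huw'
  have hnorm : ‖-u - s • w‖ = ‖u - s • w‖ := by
    rw [← neg_add', norm_neg]
    refine (mul_self_inj (norm_nonneg _) (norm_nonneg _)).1 ?_
    rw [norm_add_sq_eq_norm_sq_add_norm_sq_real huw', hsub]
  have hinner : ⟪-u - s • w, u - s • w⟫_ℝ = (s ^ 2 - 1) * (‖u‖ * ‖u‖) := by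
    rw [sub_one_mul, ← hsw, ← real_inner_self_eq_norm_mul_norm,
      ← real_inner_self_eq_norm_mul_norm]
    simp only [inner_sub_left, inner_sub_right, inner_neg_left, huw', real_inner_comm u (s • w)]
    ring
  have hu' : 0 < ‖u‖ * ‖u‖ := by positivity
  rw [InnerProductGeometry.cos_angle, hnorm, hsub, hsw, hinner]
  field_simp
  ring

theorem midpoint_mem_affineSpan_pair (k : Type*) {V P : Type*} [Ring k] [Invertible (2 : k)]
    [AddCommGroup V] [Module k V] [AddTorsor V P] (a c : P) :
    midpoint k a c ∈ line[k, a, c] :=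
  AffineMap.lineMap_mem_affineSpan_pair _ _ _

namespace EuclideanGeometry

open AffineSubspace

variable {V P : Type*} [NormedAddCommGroup V] [InnerProductSpace ℝ V] [MetricSpace P]
  [NormedAddTorsor V P]

theorem right_vsub_midpoint_ne_zero {a c : P} (hac : a ≠ c) : c -ᵥ midpoint ℝ a c ≠ 0 :=
  vsub_ne_zero.2 fun h => hac ((midpoint_eq_right_iff ℝ).1 h.symm)

variable [Fact (Module.finrank ℝ V = 2)] (o : Orientation ℝ V (Fin 2))

def isoscelesApex (a c : P) (s : ℝ) : P :=
  s • o.rightAngleRotation (c -ᵥ midpoint ℝ a c) +ᵥ midpoint ℝ a c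

theorem isoscelesApex_vsub_midpoint (a c : P) (s : ℝ) :
    isoscelesApex o a c s -ᵥ midpoint ℝ a c = s • o.rightAngleRotation (c -ᵥ midpoint ℝ a c) :=
  vadd_vsub _ _

theorem inner_rightAngleRotation_vsub_midpoint (a c : P) :
    ⟪o.rightAngleRotation (c -ᵥ midpoint ℝ a c), c -ᵥ a⟫_ℝ = 0 := by
  rw [right_vsub_midpoint, map_smul, real_inner_smul_left, o.inner_rightAngleRotation_self,
    mul_zero]

theorem isoscelesApex_mem_perpBisector (a c : P) (s : ℝ) :
    isoscelesApex o a c s ∈ perpBisector a c := by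
  rw [mem_perpBisector_iff_inner_eq_zero, isoscelesApex_vsub_midpoint,
    real_inner_smul_left, inner_rightAngleRotation_vsub_midpoint, mul_zero]

theorem cos_angle_isoscelesApex {a c : P} (hac : a ≠ c) (s : ℝ) :
    cos (∠ a (isoscelesApex o a c s) c) = (s ^ 2 - 1) / (s ^ 2 + 1) := by
  set u := c -ᵥ midpoint ℝ a c
  have ha : a -ᵥ isoscelesApex o a c s = -u - s • o.rightAngleRotation u := by
    rw [← vsub_sub_vsub_cancel_right a _ (midpoint ℝ a c), isoscelesApex_vsub_midpoint,
      left_vsub_midpoint, ← neg_vsub_eq_vsub_rev c a, smul_neg, ← right_vsub_midpoint]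
  have hc : c -ᵥ isoscelesApex o a c s = u - s • o.rightAngleRotation u := by
    rw [← vsub_sub_vsub_cancel_right c _ (midpoint ℝ a c), isoscelesApex_vsub_midpoint]
  rw [EuclideanGeometry.angle, ha, hc]
  exact InnerProductGeometry.cos_angle_neg_sub_smul_sub_smul (right_vsub_midpoint_ne_zero hac)
    (by rw [real_inner_comm, o.inner_rightAngleRotation_self])
    (LinearIsometryEquiv.norm_map _ _) s

theorem exists_eq_isoscelesApex_of_mem_perpBisector {a c p : P} (hac : a ≠ c)
    (h : p ∈ perpBisector a c) : ∃ s, p = isoscelesApex o a c s := by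
  rw [mem_perpBisector_iff_inner_eq_zero'] at h
  have hup : ⟪c -ᵥ midpoint ℝ a c, p -ᵥ midpoint ℝ a c⟫_ℝ = 0 := by
    rw [right_vsub_midpoint, inner_smul_left, h, mul_zero]
  obtain hu0 | ⟨s, hs⟩ := (o.inner_eq_zero_iff_eq_zero_or_eq_smul_rotation_pi_div_two).1 hup
  · exact absurd hu0 (right_vsub_midpoint_ne_zero hac)
  · rw [o.rotation_pi_div_two] at hs
    exact ⟨s, (eq_vadd_iff_vsub_eq _ _ _).2 hs.symm⟩

theorem isoscelesApex_neg (a c : P) (s : ℝ) :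
    isoscelesApex o a c (-s) =
      AffineEquiv.pointReflection ℝ (midpoint ℝ a c) (isoscelesApex o a c s) := by
  rw [AffineEquiv.pointReflection_apply, ← neg_vsub_eq_vsub_rev, isoscelesApex_vsub_midpoint,
    ← neg_smul]
  rfl

theorem isoscelesApex_notMem_affineSpan {a c : P} (hac : a ≠ c) {s : ℝ} (hs : s ≠ 0) :
    isoscelesApex o a c s ∉ line[ℝ, a, c] := by
  intro hmem
  have hdir := AffineSubspace.vsub_mem_direction hmem
    (midpoint_mem_affineSpan_pair ℝ a c)
  rw [direction_affineSpan, vectorSpan_pair_rev, isoscelesApex_vsub_midpoint] at hdir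
  obtain ⟨r, hr⟩ := Submodule.mem_span_singleton.1 hdir
  have hinner := congrArg (⟪o.rightAngleRotation (c -ᵥ midpoint ℝ a c), ·⟫_ℝ) hr
  simp only [inner_smul_right, inner_rightAngleRotation_vsub_midpoint, mul_zero,
    real_inner_self_eq_norm_sq, LinearIsometryEquiv.norm_map] at hinner
  exact mul_ne_zero hs (pow_ne_zero 2 (norm_ne_zero_iff.2 (right_vsub_midpoint_ne_zero hac)))
    hinner.symm

theorem sOppSide_isoscelesApex_neg {a c : P} (hac : a ≠ c) {s : ℝ} (hs : s ≠ 0) :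
    line[ℝ, a, c].SOppSide (isoscelesApex o a c s) (isoscelesApex o a c (-s)) := by
  rw [isoscelesApex_neg]
  exact AffineSubspace.sOppSide_pointReflection (midpoint_mem_affineSpan_pair ℝ a c)
    (isoscelesApex_notMem_affineSpan o hac hs)

theorem angle_isoscelesApex_eq_iff {a c : P} (hac : a ≠ c) {β : ℝ} (hβ : β ∈ Ioc 0 π)
    (s : ℝ) :
    ∠ a (isoscelesApex o a c s) c = β ↔ s = cot (β / 2) ∨ s = -cot (β / 2) := by
  have hsin : sin (β / 2) ≠ 0 := (sin_pos_of_pos_of_lt_pi (by linarith [hβ.1])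
    (by linarith [hβ.2, pi_pos])).ne'
  rw [← injOn_cos.eq_iff ⟨angle_nonneg _ _ _, angle_le_pi _ _ _⟩ ⟨hβ.1.le, hβ.2⟩,
    cos_angle_isoscelesApex o hac, cos_eq_cot_half_sq hsin,
    sub_one_div_add_one_inj (sq_nonneg _) (sq_nonneg _), sq_eq_sq_iff_eq_or_eq_neg]

end EuclideanGeometry

/-- For distinct `a, c` and `β ∈ (0,π)` there are exactly two points `o` equidistant from
`a` and `c` with `∠ a o c = β`, and they lie strictly on opposite sides of line `ac`. -/
theorem stmt_1 (a c : Pt) (hac : a ≠ c) (β : ℝ) (hβ : β ∈ Set.Ioo 0 π) :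
    ∃ o₁ o₂ : Pt, o₁ ≠ o₂ ∧
      (dist o₁ a = dist o₁ c ∧ ∠ a o₁ c = β) ∧
      (dist o₂ a = dist o₂ c ∧ ∠ a o₂ c = β) ∧
      (affineSpan ℝ ({a, c} : Set Pt)).SOppSide o₁ o₂ ∧
      (∀ o : Pt, dist o a = dist o c → ∠ a o c = β → o = o₁ ∨ o = o₂) := by
  have : Fact (Module.finrank ℝ Pt = 2) := ⟨finrank_euclideanSpace_fin⟩
  let o : Orientation ℝ Pt (Fin 2) := (EuclideanSpace.basisFun (Fin 2) ℝ).toBasis.orientation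
  have ht : 0 < cot (β / 2) := by
    rw [cot_eq_cos_div_sin]
    exact div_pos (cos_pos_of_mem_Ioo ⟨by linarith [hβ.1, pi_pos], by linarith [hβ.2]⟩)
      (sin_pos_of_pos_of_lt_pi (by linarith [hβ.1]) (by linarith [hβ.2, pi_pos]))
  have hangle := angle_isoscelesApex_eq_iff o hac (Ioo_subset_Ioc_self hβ)
  have hopp := sOppSide_isoscelesApex_neg o hac ht.ne'
  have hdist s : dist (isoscelesApex o a c s) a = dist (isoscelesApex o a c s) c :=
    AffineSubspace.mem_perpBisector_iff_dist_eq.1 (isoscelesApex_mem_perpBisector o a c s)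
  refine ⟨_, _, fun h => AffineSubspace.not_sOppSide_self _ _ (h ▸ hopp),
    ⟨hdist _, (hangle _).2 (Or.inl rfl)⟩, ⟨hdist _, (hangle _).2 (Or.inr rfl)⟩, hopp, ?_⟩
  intro p hd hA
  obtain ⟨s, rfl⟩ := exists_eq_isoscelesApex_of_mem_perpBisector o hac
    (AffineSubspace.mem_perpBisector_iff_dist_eq.2 hd)
  rcases (hangle s).1 hA with rfl | rfl
  exacts [Or.inl rfl, Or.inr rfl]
end
end

section
/- Let α ∈ (0, π/2] and let S be a finite set of segments in ℝ² such that any two segments of S that cross do so at angle α. Then there exists a subset S′ ⊆ S of pairwise noncrossing segments with 3·|S′| ≥ |S|. -/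
open EuclideanGeometry Real Set

noncomputable section

/-- Key third-coloring lemma: shifting by `t ∈ [1/3,2/3]` changes the third. -/
lemma aux_third (x t : ℝ) (h1 : 1/3 ≤ t) (h2 : t ≤ 2/3) :
    ⌊3 * Int.fract (x + t)⌋ ≠ ⌊3 * Int.fract x⌋ := by
  set u := Int.fract x with hu
  have hrw : Int.fract (x + t) = Int.fract (u + t) := by
    have : x + t = (u + t) + (⌊x⌋ : ℝ) := by rw [hu, Int.fract]; ring
    rw [this, Int.fract_add_intCast]
  have hu0 : 0 ≤ u := Int.fract_nonneg x
  have hu1 : u < 1 := Int.fract_lt_one x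
  by_cases h : u + t < 1
  · rw [hrw, Int.fract_eq_self.2 ⟨by linarith, h⟩]
    have hfl : (⌊3 * u⌋ : ℝ) ≤ 3 * u := Int.floor_le _
    have : ⌊3 * u⌋ + 1 ≤ ⌊3 * (u + t)⌋ := by
      apply Int.le_floor.2; push_cast; linarith
    omega
  · push_neg at h
    have hrw2 : u + t = (u + t - 1) + ((1 : ℤ) : ℝ) := by push_cast; ring
    rw [hrw, hrw2, Int.fract_add_intCast, Int.fract_eq_self.2 ⟨by linarith, by linarith⟩]
    have hfl : 3 * u < ⌊3 * u⌋ + 1 := Int.lt_floor_add_one _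
    have : ⌊3 * (u + t - 1)⌋ + 1 ≤ ⌊3 * u⌋ := by
      have h3 : 3 * (u + t - 1) ≤ 3 * u - 1 := by linarith
      have h4 : ⌊3 * (u + t - 1)⌋ ≤ ⌊3 * u - 1⌋ := Int.floor_le_floor h3
      have h5 : ⌊3 * u - 1⌋ = ⌊3 * u⌋ - 1 := by
        rw [show (3:ℝ) * u - 1 = 3 * u + (-1 : ℤ) by push_cast; ring, Int.floor_add_intCast]; omega
      omega
    omega

lemma aux_exists_k (β : ℝ) (h0 : 0 < β) (h2 : β ≤ 1/2) :
    ∃ k : ℕ, 1/3 ≤ (k : ℝ) * β ∧ (k : ℝ) * β ≤ 2/3 := by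
  by_cases h : 1/3 ≤ β
  · exact ⟨1, by simpa using h, by push_cast; linarith⟩
  · push_neg at h
    have heq : 1 / (3 * β) * β = 1/3 := by field_simp
    refine ⟨⌈1 / (3 * β)⌉₊, ?_, ?_⟩
    · have hk := Nat.le_ceil (1 / (3 * β))
      have := mul_le_mul_of_nonneg_right hk h0.le
      rw [heq] at this; linarith
    · have hk := Nat.ceil_lt_add_one (by positivity : (0:ℝ) ≤ 1 / (3 * β))
      have hmul := mul_le_mul_of_nonneg_right hk.le h0.le
      have heq2 : (1 / (3 * β) + 1) * β = 1/3 + β := by field_simp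
      rw [heq2] at hmul; linarith

/-- If all pairwise crossings among a finite set of segments are at angle `α ∈ (0,π/2]`,
then some subset of at least a third of the segments is pairwise noncrossing. -/
theorem stmt_18 (α : ℝ) (hα : α ∈ Set.Ioc 0 (π/2))
    (S : Finset (Pt × Pt)) (hseg : ∀ s ∈ S, s.1 ≠ s.2)
    (hcross : ∀ s ∈ S, ∀ t ∈ S, SegCross s t →
      (InnerProductGeometry.angle (s.2 - s.1) (t.2 - t.1) = α ∨
       InnerProductGeometry.angle (s.2 - s.1) (t.2 - t.1) = π - α)) :
    ∃ S' ⊆ S, (∀ s ∈ S', ∀ t ∈ S', ¬ SegCross s t) ∧ S.card ≤ 3 * S'.card := by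
  classical
  haveI : Fact (Module.finrank ℝ Pt = 2) := ⟨finrank_euclideanSpace_fin⟩
  have hα0 : 0 < α := hα.1
  have hα2 : α ≤ π / 2 := hα.2
  have hπ : (0:ℝ) < π := pi_pos
  let o : Orientation ℝ Pt (Fin 2) := (EuclideanSpace.basisFun (Fin 2) ℝ).toBasis.orientation
  let x₀ : Pt := EuclideanSpace.single 0 1
  have hx₀ : x₀ ≠ 0 := by
    intro hc
    have := congrArg (fun f => f 0) hc
    simp [x₀, EuclideanSpace.single_apply] at this
  obtain ⟨k, hk1, hk2⟩ := aux_exists_k (α / π) (div_pos hα0 hπ)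
    (by rw [div_le_iff₀ hπ]; linarith)
  let θ : Pt × Pt → ℝ := fun s => (o.oangle x₀ (s.2 - s.1)).toReal
  let c : Pt × Pt → ℤ := fun s => ⌊3 * Int.fract ((k : ℝ) * θ s / π)⌋
  -- main step: colors differ along one α-shift
  have main : ∀ x y : ℝ, (∃ n : ℤ, y - x = α + n * π) →
      ⌊3 * Int.fract ((k : ℝ) * y / π)⌋ ≠ ⌊3 * Int.fract ((k : ℝ) * x / π)⌋ := by
    rintro x y ⟨n, hn⟩
    have hts1 : 1/3 ≤ (k : ℝ) * α / π := by rw [mul_div_assoc]; exact hk1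
    have hts2 : (k : ℝ) * α / π ≤ 2/3 := by rw [mul_div_assoc]; exact hk2
    have harg : (k : ℝ) * y / π = ((k : ℝ) * x / π + (k : ℝ) * α / π) + (((k : ℕ) * n : ℤ) : ℝ) := by
      have hy : y = x + α + n * π := by linarith
      rw [hy]; push_cast; field_simp
    rw [harg, Int.fract_add_intCast]
    exact aux_third _ _ hts1 hts2
  -- crossing segments get different colors
  have hkey : ∀ s ∈ S, ∀ t ∈ S, SegCross s t → c s ≠ c t := by
    intro s hs t ht hst
    have hvs : s.2 - s.1 ≠ 0 := sub_ne_zero.2 (Ne.symm (hseg s hs))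
    have hvt : t.2 - t.1 ≠ 0 := sub_ne_zero.2 (Ne.symm (hseg t ht))
    have hang := hcross s hs t ht hst
    set A := o.oangle (s.2 - s.1) (t.2 - t.1) with hA
    have habs : |A.toReal| = α ∨ |A.toReal| = π - α := by
      rw [← o.angle_eq_abs_oangle_toReal hvs hvt]; exact hang
    have hAval : A.toReal = α ∨ A.toReal = -α ∨ A.toReal = π - α ∨ A.toReal = -(π - α) := by
      rcases habs with h | h
      · rcases (abs_eq hα0.le).1 h with h' | h'
        · exact Or.inl h'
        · exact Or.inr (Or.inl h')
      · rcases (abs_eq (by linarith : (0:ℝ) ≤ π - α)).1 h with h' | h'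
        · exact Or.inr (Or.inr (Or.inl h'))
        · exact Or.inr (Or.inr (Or.inr h'))
    have hAcoe : ((θ t - θ s : ℝ) : Real.Angle) = A := by
      have h2 := o.oangle_add hvs hx₀ hvt
      rw [o.oangle_rev x₀ (s.2 - s.1)] at h2
      have : (θ t : Real.Angle) - (θ s : Real.Angle) = A := by
        rw [sub_eq_neg_add]
        show -((o.oangle x₀ (s.2 - s.1)).toReal : Real.Angle) +
          ((o.oangle x₀ (t.2 - t.1)).toReal : Real.Angle) = A
        rw [Real.Angle.coe_toReal, Real.Angle.coe_toReal]
        exact h2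
      rw [← this]; push_cast [Real.Angle.coe_sub]; rfl
    have hex : ∃ n : ℤ, θ t - θ s = α + n * π ∨ θ t - θ s = -α + n * π := by
      have h3 : ((θ t - θ s : ℝ) : Real.Angle) = ((A.toReal : ℝ) : Real.Angle) := by
        rw [A.coe_toReal]; exact hAcoe
      obtain ⟨m, hm⟩ := Real.Angle.angle_eq_iff_two_pi_dvd_sub.1 h3
      rcases hAval with h | h | h | h
      · exact ⟨2 * m, Or.inl (by rw [h] at hm; push_cast; linarith)⟩
      · exact ⟨2 * m, Or.inr (by rw [h] at hm; push_cast; linarith)⟩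
      · exact ⟨2 * m + 1, Or.inr (by rw [h] at hm; push_cast; linarith)⟩
      · exact ⟨2 * m - 1, Or.inl (by rw [h] at hm; push_cast; linarith)⟩
    obtain ⟨n, hn | hn⟩ := hex
    · exact Ne.symm (main (θ s) (θ t) ⟨n, hn⟩)
    · exact main (θ t) (θ s) ⟨-n, by push_cast; linarith⟩
  -- colors lie in {0,1,2}
  have hc3 : ∀ s, c s = 0 ∨ c s = 1 ∨ c s = 2 := by
    intro s
    have h0 : 0 ≤ c s := Int.floor_nonneg.2 (mul_nonneg (by norm_num) (Int.fract_nonneg _))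
    have h1 : c s < 3 := by
      apply Int.floor_lt.2
      have := Int.fract_lt_one ((k : ℝ) * θ s / π)
      push_cast; linarith
    omega
  set S0 := S.filter (fun s => c s = 0) with hS0
  set S1 := S.filter (fun s => c s = 1) with hS1
  set S2 := S.filter (fun s => c s = 2) with hS2
  have hsub : S ⊆ S0 ∪ S1 ∪ S2 := by
    intro s hs
    simp only [hS0, hS1, hS2, Finset.mem_union, Finset.mem_filter]
    rcases hc3 s with h | h | h <;> tauto
  have hcard : S.card ≤ S0.card + S1.card + S2.card :=
    le_trans (Finset.card_le_card hsub)
      (le_trans (Finset.card_union_le _ _)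
        (by have := Finset.card_union_le S0 S1; omega))
  obtain ⟨i, hi⟩ : ∃ i : ℤ, S.card ≤ 3 * (S.filter (fun s => c s = i)).card := by
    by_cases hA' : S1.card ≤ S0.card ∧ S2.card ≤ S0.card
    · exact ⟨0, by rw [← hS0]; omega⟩
    · by_cases hB' : S0.card ≤ S1.card ∧ S2.card ≤ S1.card
      · exact ⟨1, by rw [← hS1]; omega⟩
      · exact ⟨2, by rw [← hS2]; omega⟩
  refine ⟨S.filter (fun s => c s = i), Finset.filter_subset _ _, ?_, hi⟩
  intro s hs t ht hst
  obtain ⟨hsS, hcs⟩ := Finset.mem_filter.1 hs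
  obtain ⟨htS, hct⟩ := Finset.mem_filter.1 ht
  exact hkey s hsS t htS hst (by rw [hcs, hct])
end
end
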